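/- For every odd integer k = 2m+1 with m ≥ 1 and every n ≥ 2k − 1, the power (P_n)^{3m−2} of the path on n vertices is not k-ordered. -/

import Mathlib

def SimpleGraph.power {V : Type*} (G : SimpleGraph V) (n : ℕ) : SimpleGraph V where
  Adj v w := 1 ≤ G.dist v w ∧ G.dist v w ≤ n
  symm := ⟨fun v w h => by show 1 ≤ G.dist w v ∧ G.dist w v ≤ n; rw [SimpleGraph.dist_comm]; exact h⟩
  loopless := ⟨fun v h => by simp [SimpleGraph.dist_self] at h⟩

/-- A graph is Hamilton-connected if every pair of distinct vertices is joined
by a Hamiltonian path. -/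
def SimpleGraph.IsHamiltonConnected {V : Type*} [DecidableEq V] (G : SimpleGraph V) : Prop :=
  ∀ v w : V, v ≠ w → ∃ p : G.Walk v w, p.IsHamiltonian

/-- A graph is `k`-ordered if every sequence of `k` distinct vertices lies on a cycle
in the given cyclic order. -/
def SimpleGraph.IsKOrdered {V : Type*} (G : SimpleGraph V) (k : ℕ) : Prop :=
  ∀ v : Fin k → V, Function.Injective v →
    ∃ (a : V) (c : G.Walk a a), c.IsCycle ∧
      ∃ t : Fin k → ℕ, StrictMono t ∧ (∀ i, t i < c.length) ∧ ∀ i, c.getVert (t i) = v i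

/-- A graph is `k`-ordered Hamiltonian if every sequence of `k` distinct vertices lies on a
Hamiltonian cycle in the given cyclic order. -/
def SimpleGraph.IsKOrderedHamiltonian {V : Type*} [DecidableEq V] (G : SimpleGraph V) (k : ℕ) :
    Prop :=
  ∀ v : Fin k → V, Function.Injective v →
    ∃ (a : V) (c : G.Walk a a), c.IsHamiltonianCycle ∧
      ∃ t : Fin k → ℕ, StrictMono t ∧ (∀ i, t i < c.length) ∧ ∀ i, c.getVert (t i) = v i

section AuxStmt5

private lemma walk_bound_stmt5 {n : ℕ} {u v : Fin n} (p : (SimpleGraph.pathGraph n).Walk u v) :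
    u.val ≤ v.val + p.length ∧ v.val ≤ u.val + p.length := by
  induction p with
  | nil => simp
  | cons h q ih =>
    rw [SimpleGraph.pathGraph_adj] at h
    simp only [SimpleGraph.Walk.length_cons]
    rcases h with h | h <;> omega

private lemma power_adj_dist_stmt5 {n s : ℕ} {u v : Fin n}
    (h : ((SimpleGraph.pathGraph n).power s).Adj u v) :
    u.val ≤ v.val + s ∧ v.val ≤ u.val + s := by
  obtain ⟨h1, h2⟩ : 1 ≤ (SimpleGraph.pathGraph n).dist u v ∧ (SimpleGraph.pathGraph n).dist u v ≤ s := h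
  obtain ⟨p, hp⟩ := SimpleGraph.exists_walk_of_dist_ne_zero
    (u := u) (v := v) (Nat.one_le_iff_ne_zero.mp h1)
  have := walk_bound_stmt5 p
  omega

private lemma getVert_support_stmt5 {V : Type*} {G : SimpleGraph V} {u v : V}
    (p : G.Walk u v) {i : ℕ} (hi : i ≤ p.length) :
    p.getVert i = p.support[i]'(by rw [SimpleGraph.Walk.length_support]; omega) := by
  induction p generalizing i with
  | nil =>
    simp only [SimpleGraph.Walk.length_nil, Nat.le_zero] at hi
    subst hi
    simp [SimpleGraph.Walk.getVert]
  | cons h q ih =>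
    cases i with
    | zero => simp
    | succ i =>
      simp only [SimpleGraph.Walk.support_cons, SimpleGraph.Walk.getVert_cons_succ,
        List.getElem_cons_succ]
      exact ih (by simpa using hi)

private lemma cycle_getVert_inj_stmt5 {V : Type*} {G : SimpleGraph V} {u : V} {p : G.Walk u u}
    (hp : p.IsCycle) {i j : ℕ} (hi : i < p.length) (hj : j < p.length)
    (h : p.getVert i = p.getVert j) : i = j := by
  have hnd := hp.support_nodup
  have hL : 3 ≤ p.length := hp.three_le_length
  have htl : p.support.tail.length = p.length := by
    simp [SimpleGraph.Walk.length_support]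
  have form : ∀ r r' : ℕ, (hr : r = r' + 1) → (hrl : r ≤ p.length) →
      p.getVert r = p.support.tail[r']'(by omega) := by
    intro r r' hr hrl
    subst hr
    rw [getVert_support_stmt5 p hrl]
    rw [List.getElem_tail]
  -- express getVert i and getVert j as tail elements
  have key : ∀ r : ℕ, (hr : r < p.length) →
      p.getVert r = p.support.tail[if r = 0 then p.length - 1 else r - 1]'(by
        split <;> omega) := by
    intro r hr
    split
    · next h0 =>
      subst h0
      have h1 : p.getVert 0 = p.getVert p.length := by
        rw [SimpleGraph.Walk.getVert_zero, SimpleGraph.Walk.getVert_length]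
      rw [h1, form p.length (p.length - 1) (by omega) le_rfl]
    · next h0 =>
      rw [form r (r - 1) (by omega) (by omega)]
  rw [key i hi, key j hj] at h
  have := (List.Nodup.getElem_inj_iff hnd).mp h
  split at this <;> split at this <;> omega

end AuxStmt5

set_option maxHeartbeats 400000 in
theorem stmt_5 (m : ℕ) (hm : 1 ≤ m) (n : ℕ) (hn : 2 * (2 * m + 1) - 1 ≤ n) :
    ¬ ((SimpleGraph.pathGraph n).power (3 * m - 2)).IsKOrdered (2 * m + 1) := by
  intro H
  have hn4 : 4 * m + 1 ≤ n := by omega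
  -- the bad sequence
  let f : ℕ → ℕ := fun j =>
    if j = 0 then 4*m-2 else if j = 2 then 4*m-1
    else if j % 2 = 1 then m - 1 - (j-1)/2 else 4*m-1 - j/2
  have hf : ∀ j, f j = (if j = 0 then 4*m-2 else if j = 2 then 4*m-1
    else if j % 2 = 1 then m - 1 - (j-1)/2 else 4*m-1 - j/2) := fun _ => rfl
  have hflt : ∀ j, f j < n := by
    intro j; simp only [hf]; split_ifs <;> first | exact (False.elim ‹False›) | omega
  have hfinj : ∀ j1, j1 ≤ 2*m → ∀ j2, j2 ≤ 2*m → f j1 = f j2 → j1 = j2 := by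
    intro j1 h1 j2 h2 he
    simp only [hf] at he
    split_ifs at he <;> first | exact (False.elim ‹False›) | omega
  have hcover : ∀ x : ℕ, (x + 1 ≤ m ∨ (3*m-1 ≤ x ∧ x ≤ 4*m-1)) →
      ∃ j, j ≤ 2*m ∧ f j = x := by
    intro x hx
    rcases hx with hx | hx
    · exact ⟨2*(m-1-x)+1, by omega, by simp only [hf]; split_ifs <;> first | exact (False.elim ‹False›) | omega⟩
    · by_cases h0 : x = 4*m-2
      · exact ⟨0, by omega, by simp only [hf]; split_ifs <;> first | exact (False.elim ‹False›) | omega⟩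
      · by_cases h2 : x = 4*m-1
        · exact ⟨2, by omega, by simp only [hf]; split_ifs <;> first | exact (False.elim ‹False›) | omega⟩
        · exact ⟨2*(4*m-1-x), by omega, by simp only [hf]; split_ifs <;> first | exact (False.elim ‹False›) | omega⟩
  have hpair : ∀ i, i < 2*m →
      (i % 2 = 1 → f i + 1 ≤ m ∧ f i + (3*m-1) ≤ f (i+1)) ∧
      (i % 2 = 0 → f (i+1) + 1 ≤ m ∧ f (i+1) + (3*m-1) ≤ f i) := by
    intro i hi
    constructor <;> intro hp <;> constructor <;>
      (simp only [hf]; split_ifs <;> first | exact (False.elim ‹False›) | omega)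
  let v : Fin (2*m+1) → Fin n := fun i => ⟨f i.val, hflt i.val⟩
  have hvdef1 : ∀ i : Fin (2*m+1), (v i).val = f i.val := fun _ => rfl
  have hvdef : ∀ (j : ℕ) (hj : j < 2*m+1), (v ⟨j, hj⟩).val = f j := fun _ _ => rfl
  clear_value v f
  have hvinj : Function.Injective v := by
    intro i j hij
    have hval : f i.val = f j.val := by
      rw [← hvdef1 i, ← hvdef1 j, hij]
    have hi := i.isLt
    have hj := j.isLt
    exact Fin.ext (hfinj i.val (by omega) j.val (by omega) hval)
  obtain ⟨a, c, hc, τ, hmono, hτlt, hτval⟩ := H v hvinj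
  have key : ∀ i : ℕ, (hi : i < 2*m) →
      ∃ q, τ ⟨i, by omega⟩ < q ∧ q < τ ⟨i+1, by omega⟩ ∧
        m ≤ (c.getVert q).val ∧ (c.getVert q).val ≤ 3*m-2 := by
    intro i hi
    have hi0 : i < 2*m+1 := by omega
    have hi1 : i+1 < 2*m+1 := by omega
    have hlt01 : τ ⟨i, hi0⟩ < τ ⟨i+1, hi1⟩ := hmono (Fin.mk_lt_mk.mpr (by omega))
    have hL0 := hτlt ⟨i, hi0⟩
    have hL1 := hτlt ⟨i+1, hi1⟩
    have hv0 : (c.getVert (τ ⟨i, hi0⟩)).val = f i := by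
      rw [hτval ⟨i, hi0⟩]; exact hvdef i hi0
    have hv1 : (c.getVert (τ ⟨i+1, hi1⟩)).val = f (i+1) := by
      rw [hτval ⟨i+1, hi1⟩]; exact hvdef (i+1) hi1
    have hbig : f i + (3*m-1) ≤ f (i+1) ∨ f (i+1) + (3*m-1) ≤ f i := by
      have hp := hpair i hi
      rcases Nat.mod_two_eq_zero_or_one i with h | h
      · exact Or.inr (hp.2 h).2
      · exact Or.inl (hp.1 h).2
    have hgap : τ ⟨i, hi0⟩ + 2 ≤ τ ⟨i+1, hi1⟩ := by
      by_contra hcon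
      have hlen : τ ⟨i, hi0⟩ < c.length := by omega
      have hadj := c.adj_getVert_succ hlen
      have hb := power_adj_dist_stmt5 hadj
      have he : τ ⟨i, hi0⟩ + 1 = τ ⟨i+1, hi1⟩ := by omega
      rw [he, hv1, hv0] at hb
      omega
    have hwit : ∃ q, τ ⟨i, hi0⟩ < q ∧ q < τ ⟨i+1, hi1⟩ ∧
        (c.getVert q).val ≤ 4*m-3 := by
      rcases Nat.mod_two_eq_zero_or_one i with h | h
      · -- small endpoint is f (i+1), at position τ ⟨i+1⟩; take q = τ ⟨i+1⟩ - 1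
        have hlen : τ ⟨i+1, hi1⟩ - 1 < c.length := by omega
        have hadj := c.adj_getVert_succ hlen
        have hq1 : τ ⟨i+1, hi1⟩ - 1 + 1 = τ ⟨i+1, hi1⟩ := by omega
        rw [hq1] at hadj
        have hb := power_adj_dist_stmt5 hadj
        rw [hv1] at hb
        have hsm := (hpair i hi).2 h
        exact ⟨τ ⟨i+1, hi1⟩ - 1, by omega, by omega, by omega⟩
      · -- small endpoint is f i, at position τ ⟨i⟩; take q = τ ⟨i⟩ + 1
        have hlen : τ ⟨i, hi0⟩ < c.length := by omega
        have hadj := c.adj_getVert_succ hlen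
        have hb := power_adj_dist_stmt5 hadj
        rw [hv0] at hb
        have hsm := (hpair i hi).1 h
        exact ⟨τ ⟨i, hi0⟩ + 1, by omega, by omega, by omega⟩
    obtain ⟨q, hq0, hq1, hub⟩ := hwit
    have hqL : q < c.length := by omega
    have hnotspec : ∀ j : Fin (2*m+1), c.getVert q ≠ v j := by
      intro j hqj
      have heq : q = τ j :=
        cycle_getVert_inj_stmt5 hc hqL (hτlt j) (hqj.trans (hτval j).symm)
      have h1 : (⟨i, by omega⟩ : Fin (2*m+1)) < j :=
        hmono.lt_iff_lt.mp (by omega)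
      have h2 : j < (⟨i+1, by omega⟩ : Fin (2*m+1)) :=
        hmono.lt_iff_lt.mp (by omega)
      rw [Fin.lt_def] at h1 h2
      simp only [] at h1 h2
      omega
    have hnotval : ∀ x : ℕ, (x + 1 ≤ m ∨ (3*m-1 ≤ x ∧ x ≤ 4*m-1)) →
        (c.getVert q).val ≠ x := by
      intro x hx hqx
      obtain ⟨j, hj2m, hjval⟩ := hcover x hx
      refine hnotspec ⟨j, by omega⟩ (Fin.ext ?_)
      rw [hvdef j (by omega), hjval]
      exact hqx
    have hlow : ¬ ((c.getVert q).val + 1 ≤ m) := fun hcon =>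
      hnotval (c.getVert q).val (Or.inl hcon) rfl
    have hmid : ¬ (3*m-1 ≤ (c.getVert q).val ∧ (c.getVert q).val ≤ 4*m-1) := fun hcon =>
      hnotval (c.getVert q).val (Or.inr hcon) rfl
    exact ⟨q, hq0, hq1, by omega, by omega⟩
  -- pigeonhole
  let g : Fin (2*m) → ℕ := fun i => (key i.val i.isLt).choose
  have hg : ∀ i : Fin (2*m), τ ⟨i.val, by omega⟩ < g i ∧ g i < τ ⟨i.val+1, by omega⟩ ∧
      m ≤ (c.getVert (g i)).val ∧ (c.getVert (g i)).val ≤ 3*m-2 :=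
    fun i => (key i.val i.isLt).choose_spec
  have hgmono : ∀ i j : Fin (2*m), i < j → g i < g j := by
    intro i j hij
    have h1 := (hg i).2.1
    have h2 := (hg j).1
    have h3 : τ ⟨i.val+1, by omega⟩ ≤ τ ⟨j.val, by omega⟩ :=
      hmono.monotone (Fin.mk_le_mk.mpr (by omega))
    omega
  have hgL : ∀ i : Fin (2*m), g i < c.length := by
    intro i
    have := (hg i).2.1
    have := hτlt ⟨i.val+1, by omega⟩
    omega
  have hginj : ∀ i j : Fin (2*m), i ≠ j → (c.getVert (g i)).val ≠ (c.getVert (g j)).val := by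
    intro i j hij hval
    have hne : g i ≠ g j := by
      rcases lt_or_gt_of_ne hij with h | h
      · exact Nat.ne_of_lt (hgmono i j h)
      · exact Nat.ne_of_gt (hgmono j i h)
    exact hne (cycle_getVert_inj_stmt5 hc (hgL i) (hgL j) (Fin.ext hval))
  have hcard : (Finset.univ : Finset (Fin (2*m))).card ≤ (Finset.Icc m (3*m-2)).card := by
    apply Finset.card_le_card_of_injOn (fun i : Fin (2*m) => (c.getVert (g i)).val)
    · intro i _
      rw [Finset.mem_coe, Finset.mem_Icc]
      exact ⟨(hg i).2.2.1, (hg i).2.2.2⟩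
    · intro i _ j _ hij
      by_contra hne
      exact hginj i j hne hij
  rw [Finset.card_univ, Fintype.card_fin, Nat.card_Icc] at hcard
  omega
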